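/- (Key step in the proof of Theorem 2 of the paper.) Under Assumption 1, suppose b ∈ ℝ^K satisfies E[n^{-1} Σ_{i=1}^n (2Y_i − 1)·1{X_i b ≥ 0}·1{X_i β < 0}] ≥ 0 and E[n^{-1} Σ_{i=1}^n (1 − 2Y_i)·1{X_i b ≤ 0}·1{X_i β > 0}] ≥ 0. Then for every i = 1, …, n: E[2Y_i − 1]·1{X_i b ≥ 0 and X_i β < 0} = 0 and E[2Y_i − 1]·1{X_i b ≤ 0 and X_i β > 0} = 0. -/

import Mathlib

/-!
With `Y = 1{c + U ≥ 0}` and `U` of median zero, `E[2Y - 1] = 2 P(U ≥ -c) - 1` is `≤ 0` when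
`c < 0` and `≥ 0` when `c > 0`. Hence every summand of either moment condition has nonpositive
expectation, while the average of the summands has nonnegative expectation; so each summand
has expectation zero.
-/

open MeasureTheory ProbabilityTheory

lemma integral_mul_eq_zero_of_integral_const_mul_sum_nonneg {Ω ι : Type*} [MeasurableSpace Ω]
    [Fintype ι] {μ : Measure Ω} {t : ι → Ω → ℝ} {a : ι → ℝ} {c : ℝ} (hc : 0 < c)
    (ht : ∀ i, Integrable (t i) μ) (hle : ∀ i, (∫ ω, t i ω ∂μ) * a i ≤ 0)
    (h : 0 ≤ ∫ ω, c * ∑ i, t i ω * a i ∂μ) (i : ι) :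
    (∫ ω, t i ω ∂μ) * a i = 0 := by
  rw [integral_const_mul, integral_finsetSum _ fun i _ => (ht i).mul_const (a i)] at h
  simp only [integral_mul_const] at h
  have hsum : ∑ i, (∫ ω, t i ω ∂μ) * a i = 0 :=
    le_antisymm (Finset.sum_nonpos fun i _ => hle i) (nonneg_of_mul_nonneg_right h hc)
  exact (Finset.sum_eq_zero_iff_of_nonpos fun i _ => hle i).mp hsum i (Finset.mem_univ i)

lemma ite_and_eq_ite_mul_ite {R : Type*} [MulZeroOneClass R] (p q : Prop) [Decidable p]
    [Decidable q] : (if p ∧ q then (1 : R) else 0) = (if p then 1 else 0) * (if q then 1 else 0) := by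
  rw [ite_zero_mul_ite_zero, mul_one]

namespace BinaryOutcome

variable {Ω : Type*}

noncomputable def outcome (c : ℝ) (U : Ω → ℝ) (ω : Ω) : ℝ := if 0 ≤ c + U ω then 1 else 0

lemma outcome_eq_indicator (c : ℝ) (U : Ω → ℝ) :
    outcome c U = {ω | 0 ≤ c + U ω}.indicator 1 := by
  ext ω
  simp [outcome, Set.indicator_apply]

variable [MeasurableSpace Ω] {P : Measure Ω} [IsProbabilityMeasure P] {U : Ω → ℝ}

lemma integrable_two_mul_outcome_sub_one (hU : Measurable U) (c : ℝ) :
    Integrable (fun ω => 2 * outcome c U ω - 1) P := by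
  have hs : MeasurableSet {ω | 0 ≤ c + U ω} := measurableSet_le measurable_const (by fun_prop)
  rw [outcome_eq_indicator]
  exact (((integrable_const (1 : ℝ)).indicator hs).const_mul 2).sub (integrable_const 1)

lemma integral_two_mul_outcome_sub_one (hU : Measurable U) (c : ℝ) :
    ∫ ω, 2 * outcome c U ω - 1 ∂P = 2 * P.real {ω | 0 ≤ c + U ω} - 1 := by
  have hs : MeasurableSet {ω | 0 ≤ c + U ω} := measurableSet_le measurable_const (by fun_prop)
  have hI : Integrable ({ω | 0 ≤ c + U ω}.indicator (1 : Ω → ℝ)) P :=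
    (integrable_const (1 : ℝ)).indicator hs
  rw [outcome_eq_indicator, integral_sub (hI.const_mul 2) (integrable_const 1),
    integral_const_mul, integral_indicator_one hs]
  simp

lemma integral_two_mul_outcome_sub_one_nonpos (hU : Measurable U)
    (hmed : P {ω | 0 ≤ U ω} = 1 / 2) {c : ℝ} (hc : c ≤ 0) :
    ∫ ω, 2 * outcome c U ω - 1 ∂P ≤ 0 := by
  have hmono : P.real {ω | 0 ≤ c + U ω} ≤ P.real {ω | 0 ≤ U ω} :=
    measureReal_mono fun ω (hω : 0 ≤ c + U ω) => show 0 ≤ U ω by linarith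
  rw [measureReal_def _ {ω | 0 ≤ U ω}, hmed] at hmono
  norm_num at hmono
  linarith [integral_two_mul_outcome_sub_one (P := P) hU c]

lemma integral_two_mul_outcome_sub_one_nonneg (hU : Measurable U)
    (hmed : P {ω | 0 ≤ U ω} = 1 / 2) {c : ℝ} (hc : 0 ≤ c) :
    0 ≤ ∫ ω, 2 * outcome c U ω - 1 ∂P := by
  have hmono : P.real {ω | 0 ≤ U ω} ≤ P.real {ω | 0 ≤ c + U ω} :=
    measureReal_mono fun ω (hω : 0 ≤ U ω) => show 0 ≤ c + U ω by linarith
  rw [measureReal_def _ {ω | 0 ≤ U ω}, hmed] at hmono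
  norm_num at hmono
  linarith [integral_two_mul_outcome_sub_one (P := P) hU c]

end BinaryOutcome

open BinaryOutcome

theorem theorem2_key_step
    {Ω : Type*} [MeasurableSpace Ω] (P : Measure Ω) [IsProbabilityMeasure P]
    {n K : ℕ}
    (X : Fin n → Fin K → ℝ) (β : Fin K → ℝ)
    (U : Fin n → Ω → ℝ) (hU : ∀ i, Measurable (U i))
    (Y : Fin n → Ω → ℝ)
    (hY : ∀ i ω, Y i ω = if 0 ≤ (∑ j, X i j * β j) + U i ω then 1 else 0)
    (hmed : ∀ i, P {ω | 0 ≤ U i ω} = 1/2)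
    (b : Fin K → ℝ)
    (hmomu : 0 ≤ (∫ ω, (n : ℝ)⁻¹ * ∑ i, (2 * Y i ω - 1) *
      (if 0 ≤ (∑ j, X i j * b j) then 1 else 0) *
      (if (∑ j, X i j * β j) < 0 then 1 else 0) ∂P))
    (hmoml : 0 ≤ (∫ ω, (n : ℝ)⁻¹ * ∑ i, (1 - 2 * Y i ω) *
      (if (∑ j, X i j * b j) ≤ 0 then 1 else 0) *
      (if 0 < (∑ j, X i j * β j) then 1 else 0) ∂P)) :
    ∀ i : Fin n,
      (∫ ω, (2 * Y i ω - 1) ∂P) *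
        (if 0 ≤ (∑ j, X i j * b j) ∧ (∑ j, X i j * β j) < 0 then 1 else 0) = 0 ∧
      (∫ ω, (2 * Y i ω - 1) ∂P) *
        (if (∑ j, X i j * b j) ≤ 0 ∧ 0 < (∑ j, X i j * β j) then 1 else 0) = 0 := by
  intro i
  have hn : (0 : ℝ) < (n : ℝ)⁻¹ := by have := i.pos; positivity
  obtain rfl : Y = fun i => outcome (∑ j, X i j * β j) (U i) := funext₂ hY
  have hint i := integrable_two_mul_outcome_sub_one (P := P) (hU i) (∑ j, X i j * β j)
  refine ⟨?_, ?_⟩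
  · rw [ite_and_eq_ite_mul_ite]
    apply integral_mul_eq_zero_of_integral_const_mul_sum_nonneg hn hint
    · intro i
      by_cases hc : ∑ j, X i j * β j < 0
      · exact mul_nonpos_of_nonpos_of_nonneg
          (integral_two_mul_outcome_sub_one_nonpos (hU i) (hmed i) hc.le) (by positivity)
      · simp [hc]
    · simpa only [mul_assoc] using hmomu
  · rw [ite_and_eq_ite_mul_ite, ← neg_eq_zero, ← mul_neg]
    apply integral_mul_eq_zero_of_integral_const_mul_sum_nonneg hn hint
    · intro i
      by_cases hc : 0 < ∑ j, X i j * β j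
      · exact mul_nonpos_of_nonneg_of_nonpos
          (integral_two_mul_outcome_sub_one_nonneg (hU i) (hmed i) hc.le)
          (neg_nonpos.mpr (by positivity))
      · simp [hc]
    · have hflip (y : ℝ) : 1 - 2 * y = -(2 * y - 1) := by ring
      simpa only [hflip, neg_mul, mul_neg, mul_assoc] using hmoml
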